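/- Every formula provable in the Hilbert-style system H⊢K (with axioms: propositional tautologies, variable-restricted universal instantiation ∀x φ → φ(y/x), self-identity t = t, variable-restricted substitution x = y → (φ(x/z) → φ(y/z)), existence c = c → ∃x(x = c), distinct-sorts x ≠ y, modal K axiom, Barcan formula, knowledge of distinctness x ≠ y → K_t x ≠ y; and rules modus ponens, necessitation, and universal generalization) is valid in the non-standard semantics. -/
import Mathlib


/-- The two sorts (types) of the two-sorted term-modal language. -/
inductive TMSort : Type
  | agt | obj
deriving DecidableEq

/-- A signature for the two-sorted term-modal language. -/
structure Sig where
  Var : Type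
  Con : Type
  Fn : Type
  Rel : Type
  varSort : Var → TMSort
  conSort : Con → TMSort
  deqVar : DecidableEq Var

attribute [instance] Sig.deqVar

/-- Terms: variables, constants, function applications. -/
inductive Tm (S : Sig) : Type
  | var (x : S.Var)
  | con (c : S.Con)
  | app (f : S.Fn) (ts : List (Tm S))

/-- Formulas of term-modal logic. -/
inductive Fm (S : Sig) : Type
  | rel (P : S.Rel) (ts : List (Tm S))
  | eq (t s : Tm S)
  | neg (φ : Fm S)
  | and (φ ψ : Fm S)
  | all (x : S.Var) (φ : Fm S)
  | know (t : Tm S) (φ : Fm S)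

variable {S : Sig}

/-- Substitution of variable `y` for variable `x` in a term. -/
def Tm.substT (y x : S.Var) : Tm S → Tm S
  | .var z => if z = x then .var y else .var z
  | .con c => .con c
  | .app f ts => .app f (ts.attach.map fun t => t.1.substT y x)


decreasing_by
  have := List.sizeOf_lt_of_mem t.2
  simp only [Tm.app.sizeOf_spec]
  omega

/-- Variables occurring in a term. -/
def Tm.fvT : Tm S → List S.Var
  | .var z => [z]
  | .con _ => []
  | .app _ ts => ts.attach.flatMap fun t => t.1.fvT


decreasing_by
  have := List.sizeOf_lt_of_mem t.2
  simp only [Tm.app.sizeOf_spec]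
  omega

/-- Substitution of variable `y` for free occurrences of variable `x` in a formula. -/
def Fm.substF (y x : S.Var) : Fm S → Fm S
  | .rel P ts => .rel P (ts.map (Tm.substT y x))
  | .eq t s => .eq (t.substT y x) (s.substT y x)
  | .neg φ => .neg (φ.substF y x)
  | .and φ ψ => .and (φ.substF y x) (ψ.substF y x)
  | .all z φ => if z = x then .all z φ else .all z (φ.substF y x)
  | .know t φ => .know (t.substT y x) (φ.substF y x)

/-- Free variables of a formula. -/
def Fm.fvF : Fm S → List S.Var
  | .rel _ ts => ts.flatMap Tm.fvT
  | .eq t s => t.fvT ++ s.fvT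
  | .neg φ => φ.fvF
  | .and φ ψ => φ.fvF ++ ψ.fvF
  | .all z φ => φ.fvF.filter (· ≠ z)
  | .know t φ => t.fvT ++ φ.fvF

/-- Bound (binder) variables of a formula. -/
def Fm.bvF : Fm S → List S.Var
  | .rel _ _ => []
  | .eq _ _ => []
  | .neg φ => φ.bvF
  | .and φ ψ => φ.bvF ++ ψ.bvF
  | .all z φ => z :: φ.bvF
  | .know _ φ => φ.bvF

/-- Defined connectives. -/
def Fm.imp (φ ψ : Fm S) : Fm S := .neg (.and φ (.neg ψ))
def Fm.ex (x : S.Var) (φ : Fm S) : Fm S := .neg (.all x (.neg φ))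
def Fm.neq (t s : Tm S) : Fm S := .neg (.eq t s)

/-- The diagonal (interpretation of equality) over a domain. -/
def diag (D : Type) : Set (List D) := {l | ∃ d : D, l = [d, d]}

/-- A non-standard model: the interpretation of constants and function symbols
depends additionally on a parameter set `X ⊆ D^n` (encoded as a set of lists),
intended to be the extension of the relation symbol they occur under. -/
structure NSModel (S : Sig) where
  D : Type
  W : Type
  hW : Nonempty W
  sortOf : D → TMSort
  hAgt : ∃ d, sortOf d = TMSort.agt
  hObj : ∃ d, sortOf d = TMSort.obj
  R : D → W → W → Prop
  Jc : S.Con → W → Set (List D) → D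
  hJc : ∀ c w X, sortOf (Jc c w X) = S.conSort c
  Jf : S.Fn → W → Set (List D) → List D → D
  JP : S.Rel → W → Set (List D)

/-- Extension of a term in a non-standard model, relative to world `w`,
parameter set `X` and valuation `v`. -/
def NSModel.extT (N : NSModel S) (w : N.W) (X : Set (List N.D)) (v : S.Var → N.D) :
    Tm S → N.D
  | .var x => v x
  | .con c => N.Jc c w X
  | .app f ts => N.Jf f w X (ts.attach.map fun t => N.extT w X v t.1)


decreasing_by
  have := List.sizeOf_lt_of_mem t.2
  simp only [Tm.app.sizeOf_spec]
  omega

/-- Satisfaction in a non-standard model. -/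
def NSModel.Sat (N : NSModel S) : N.W → (S.Var → N.D) → Fm S → Prop
  | w, v, .rel P ts => (ts.map fun t => N.extT w (N.JP P w) v t) ∈ N.JP P w
  | w, v, .eq t s => N.extT w (diag N.D) v t = N.extT w (diag N.D) v s
  | w, v, .neg φ => ¬ N.Sat w v φ
  | w, v, .and φ ψ => N.Sat w v φ ∧ N.Sat w v ψ
  | w, v, .all x φ => ∀ d : N.D, N.sortOf d = S.varSort x → N.Sat w (Function.update v x d) φ
  | w, v, .know t φ => ∀ w' : N.W, N.R (N.extT w ∅ v t) w w' → N.Sat w' v φ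

/-- A valuation respecting the sorts of variables. -/
def NSModel.GoodVal (N : NSModel S) (v : S.Var → N.D) : Prop :=
  ∀ x : S.Var, N.sortOf (v x) = S.varSort x

/-- Validity in the non-standard semantics. -/
def NSValid (φ : Fm S) : Prop :=
  ∀ (N : NSModel S) (w : N.W) (v : S.Var → N.D), N.GoodVal v → N.Sat w v φ

/-- A standard (TML) model: constants and function symbols are interpreted
world-relatively (non-rigidly), over a constant domain. -/
structure TMLModel (S : Sig) where
  D : Type
  W : Type
  hW : Nonempty W
  sortOf : D → TMSort
  hAgt : ∃ d, sortOf d = TMSort.agt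
  hObj : ∃ d, sortOf d = TMSort.obj
  R : D → W → W → Prop
  Ic : S.Con → W → D
  hIc : ∀ c w, sortOf (Ic c w) = S.conSort c
  If : S.Fn → W → List D → D
  IP : S.Rel → W → Set (List D)

/-- Extension of a term in a TML model. -/
def TMLModel.extT (M : TMLModel S) (w : M.W) (v : S.Var → M.D) : Tm S → M.D
  | .var x => v x
  | .con c => M.Ic c w
  | .app f ts => M.If f w (ts.attach.map fun t => M.extT w v t.1)


decreasing_by
  have := List.sizeOf_lt_of_mem t.2
  simp only [Tm.app.sizeOf_spec]
  omega

/-- Satisfaction in a TML model. -/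
def TMLModel.Sat (M : TMLModel S) : M.W → (S.Var → M.D) → Fm S → Prop
  | w, v, .rel P ts => (ts.map fun t => M.extT w v t) ∈ M.IP P w
  | w, v, .eq t s => M.extT w v t = M.extT w v s
  | w, v, .neg φ => ¬ M.Sat w v φ
  | w, v, .and φ ψ => M.Sat w v φ ∧ M.Sat w v ψ
  | w, v, .all x φ => ∀ d : M.D, M.sortOf d = S.varSort x → M.Sat w (Function.update v x d) φ
  | w, v, .know t φ => ∀ w' : M.W, M.R (M.extT w v t) w w' → M.Sat w' v φ

def TMLModel.GoodVal (M : TMLModel S) (v : S.Var → M.D) : Prop :=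
  ∀ x : S.Var, M.sortOf (v x) = S.varSort x

/-- Validity over the class of all frames in the TML semantics. -/
def TMLValid (φ : Fm S) : Prop :=
  ∀ (M : TMLModel S) (w : M.W) (v : S.Var → M.D), M.GoodVal v → M.Sat w v φ

/-- Propositional tautology: true under every Boolean valuation of formulas
that respects negation and conjunction. -/
def Taut (φ : Fm S) : Prop :=
  ∀ b : Fm S → Prop, (∀ ψ : Fm S, b ψ.neg ↔ ¬ b ψ) →
    (∀ ψ χ : Fm S, b (ψ.and χ) ↔ b ψ ∧ b χ) → b φ

/-- The Hilbert-style system H⊢K of Liberman et al. -/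
inductive Prov : Fm S → Prop
  | taut {φ : Fm S} : Taut φ → Prov φ
  | ui {x y : S.Var} {φ : Fm S} :
      S.varSort x = S.varSort y → y ∉ φ.bvF →
      Prov (Fm.imp (.all x φ) (φ.substF y x))
  | id {t : Tm S} : Prov (.eq t t)
  | ps {x y z : S.Var} {φ : Fm S} :
      S.varSort x = S.varSort z → S.varSort y = S.varSort z →
      x ∉ φ.bvF → y ∉ φ.bvF →
      Prov (Fm.imp (.eq (.var x) (.var y)) (Fm.imp (φ.substF x z) (φ.substF y z)))
  | eid {c : S.Con} {x : S.Var} :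
      S.varSort x = S.conSort c →
      Prov (Fm.imp (.eq (.con c) (.con c)) (Fm.ex x (.eq (.var x) (.con c))))
  | dd {x y : S.Var} :
      S.varSort x ≠ S.varSort y → Prov (Fm.neq (.var x) (.var y))
  | axK {t : Tm S} {φ ψ : Fm S} :
      Prov (Fm.imp (.know t (Fm.imp φ ψ)) (Fm.imp (.know t φ) (.know t ψ)))
  | barcan {t : Tm S} {x : S.Var} {φ : Fm S} :
      x ∉ t.fvT → Prov (Fm.imp (.all x (.know t φ)) (.know t (.all x φ)))
  | kni {t : Tm S} {x y : S.Var} :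
      Prov (Fm.imp (Fm.neq (.var x) (.var y)) (.know t (Fm.neq (.var x) (.var y))))
  | mp {φ ψ : Fm S} : Prov (Fm.imp φ ψ) → Prov φ → Prov ψ
  | nec {t : Tm S} {φ : Fm S} : Prov φ → Prov (.know t φ)
  | ug {x : S.Var} {φ ψ : Fm S} :
      x ∉ φ.fvF → Prov (Fm.imp φ ψ) → Prov (Fm.imp φ (.all x ψ))

/-- Custom induction principle for terms. -/
theorem Tm.my_ind {P : Tm S → Prop} (hv : ∀ x, P (.var x)) (hc : ∀ c, P (.con c))
    (ha : ∀ f ts, (∀ t ∈ ts, P t) → P (.app f ts)) : ∀ t, P t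
  | .var x => hv x
  | .con c => hc c
  | .app f ts => ha f ts (fun t _ => Tm.my_ind hv hc ha t)
termination_by t => sizeOf t
decreasing_by
  rename_i ht
  have := List.sizeOf_lt_of_mem ht
  simp only [Tm.app.sizeOf_spec]
  omega

theorem attach_map_val' {α β : Type*} (l : List α) (f : α → β) :
    l.attach.map (fun t => f t.1) = l.map f := by simp

theorem extT_congr (N : NSModel S) (w : N.W) (X : Set (List N.D)) {v v' : S.Var → N.D}
    (t : Tm S) (h : ∀ z ∈ t.fvT, v z = v' z) :
    N.extT w X v t = N.extT w X v' t := by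
  induction t using Tm.my_ind with
  | hv x => simp only [NSModel.extT]; exact h x (by simp [Tm.fvT])
  | hc c => simp only [NSModel.extT]
  | ha f ts ih =>
    simp only [NSModel.extT]
    congr 1
    refine List.map_congr_left fun t ht => ?_
    exact ih t.1 t.2 fun z hz => h z (by simp only [Tm.fvT, List.mem_flatMap]; exact ⟨t, List.mem_attach ts t, hz⟩)

theorem extT_substT (N : NSModel S) (w : N.W) (X : Set (List N.D)) (v : S.Var → N.D)
    (y x : S.Var) (t : Tm S) :
    N.extT w X v (t.substT y x) = N.extT w X (Function.update v x (v y)) t := by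
  induction t using Tm.my_ind with
  | hv z =>
    simp only [Tm.substT]
    by_cases hz : z = x <;> simp [hz, NSModel.extT, Function.update]
  | hc c => simp only [Tm.substT, NSModel.extT]
  | ha f ts ih =>
    simp only [Tm.substT, NSModel.extT]
    congr 1
    rw [attach_map_val', List.map_map]
    refine List.map_congr_left fun t ht => ?_
    exact ih t.1 t.2

theorem sat_imp (N : NSModel S) (w : N.W) (v : S.Var → N.D) (φ ψ : Fm S) :
    N.Sat w v (Fm.imp φ ψ) ↔ (N.Sat w v φ → N.Sat w v ψ) := by
  simp only [Fm.imp, NSModel.Sat]; tauto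

theorem Sat_congr (N : NSModel S) (φ : Fm S) :
    ∀ {v v' : S.Var → N.D} (_ : ∀ z ∈ φ.fvF, v z = v' z) (w : N.W),
      N.Sat w v φ ↔ N.Sat w v' φ := by
  induction φ with
  | rel P ts =>
    intro v v' h w
    simp only [NSModel.Sat]
    have : (ts.map fun t => N.extT w (N.JP P w) v t) =
        ts.map fun t => N.extT w (N.JP P w) v' t := by
      refine List.map_congr_left fun t ht => extT_congr N w _ t fun z hz => ?_
      exact h z (by simp only [Fm.fvF, List.mem_flatMap]; exact ⟨t, ht, hz⟩)
    rw [this]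
  | eq t s =>
    intro v v' h w
    simp only [NSModel.Sat]
    rw [extT_congr N w _ t fun z hz => h z (by simp [Fm.fvF, hz]),
      extT_congr N w _ s fun z hz => h z (by simp [Fm.fvF, hz])]
  | neg φ ih =>
    intro v v' h w
    simp only [NSModel.Sat]
    rw [ih h w]
  | and φ ψ ih1 ih2 =>
    intro v v' h w
    simp only [NSModel.Sat]
    rw [ih1 (fun z hz => h z (by simp [Fm.fvF, hz])) w,
      ih2 (fun z hz => h z (by simp [Fm.fvF, hz])) w]
  | all z φ ih =>
    intro v v' h w
    simp only [NSModel.Sat]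
    refine forall_congr' fun d => imp_congr_right fun _ => ih (fun u hu => ?_) w
    by_cases huz : u = z
    · subst huz; simp
    · rw [Function.update_of_ne huz, Function.update_of_ne huz]
      exact h u (by simp [Fm.fvF, List.mem_filter, hu, huz])
  | know t φ ih =>
    intro v v' h w
    simp only [NSModel.Sat]
    rw [extT_congr N w _ t fun z hz => h z (by simp [Fm.fvF, hz])]
    exact forall_congr' fun w' => imp_congr_right fun _ =>
      ih (fun z hz => h z (by simp [Fm.fvF, hz])) w'

theorem Sat_substF (N : NSModel S) (φ : Fm S) (y x : S.Var) (hy : y ∉ φ.bvF) :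
    ∀ (v : S.Var → N.D) (w : N.W),
      N.Sat w v (φ.substF y x) ↔ N.Sat w (Function.update v x (v y)) φ := by
  induction φ with
  | rel P ts =>
    intro v w
    simp only [Fm.substF, NSModel.Sat, List.map_map]
    have : ((fun t => N.extT w (N.JP P w) v t) ∘ Tm.substT y x : Tm S → N.D) =
        fun t => N.extT w (N.JP P w) (Function.update v x (v y)) t := by
      funext t; exact extT_substT N w _ v y x t
    rw [this]
  | eq t s =>
    intro v w
    simp only [Fm.substF, NSModel.Sat, extT_substT]
  | neg φ ih =>
    intro v w
    simp only [Fm.substF, NSModel.Sat, ih hy]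
  | and φ ψ ih1 ih2 =>
    intro v w
    simp only [Fm.bvF, List.mem_append] at hy
    push_neg at hy
    simp only [Fm.substF, NSModel.Sat, ih1 hy.1, ih2 hy.2]
  | all z φ ih =>
    intro v w
    simp only [Fm.bvF, List.mem_cons] at hy
    push_neg at hy
    obtain ⟨hyz, hybv⟩ := hy
    simp only [Fm.substF]
    by_cases hzx : z = x
    · subst hzx
      simp only [if_pos rfl, NSModel.Sat]
      refine forall_congr' fun d => imp_congr_right fun _ => ?_
      rw [Function.update_idem]
    · simp only [if_neg hzx, NSModel.Sat]
      refine forall_congr' fun d => imp_congr_right fun _ => ?_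
      rw [ih hybv]
      rw [Function.update_of_ne hyz]
      rw [Function.update_comm (fun h => hzx h.symm)]
  | know t φ ih =>
    intro v w
    simp only [Fm.bvF] at hy
    simp only [Fm.substF, NSModel.Sat, extT_substT]
    exact forall_congr' fun w' => imp_congr_right fun _ => ih hy v w'

/-- soundness of the Hilbert-style system H⊢K with respect to the
non-standard semantics. -/
theorem stmt13 (S : Sig) (φ : Fm S) (h : Prov φ) : NSValid φ := by
  induction h with
  | taut ht =>
    intro N w v hv
    exact ht (N.Sat w v) (fun ψ => by simp [NSModel.Sat]) (fun ψ χ => by simp [NSModel.Sat])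
  | @ui x y ψ hxy hybv =>
    intro N w v hv
    rw [sat_imp]
    intro hall
    rw [Sat_substF N _ _ _ hybv]
    exact hall (v y) (by rw [hv y, hxy])
  | id => intro N w v hv; simp [NSModel.Sat]
  | @ps x y z ψ hxz hyz hxbv hybv =>
    intro N w v hv
    rw [sat_imp]; intro heq
    rw [sat_imp]; intro hφx
    have hvxy : v x = v y := by simpa [NSModel.Sat, NSModel.extT] using heq
    rw [Sat_substF N _ _ _ hybv]
    rw [Sat_substF N _ _ _ hxbv] at hφx
    rwa [hvxy] at hφx
  | @eid c x hxc =>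
    intro N w v hv
    rw [sat_imp]; intro _
    simp only [Fm.ex, NSModel.Sat]
    intro hall
    refine hall (N.Jc c w (diag N.D)) (by rw [N.hJc, hxc]) ?_
    simp [NSModel.Sat, NSModel.extT]
  | @dd x y hsort =>
    intro N w v hv
    simp only [Fm.neq, NSModel.Sat, NSModel.extT]
    intro h
    exact hsort (by rw [← hv x, ← hv y, h])
  | axK =>
    intro N w v hv
    rw [sat_imp]; intro hK
    rw [sat_imp]; intro hKφ
    simp only [NSModel.Sat] at hK hKφ ⊢
    intro w' hr
    have h1 := hK w' hr
    by_contra hn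
    exact h1 ⟨hKφ w' hr, hn⟩
  | @barcan t x ψ hx =>
    intro N w v hv
    rw [sat_imp]; intro hall
    simp only [NSModel.Sat] at hall ⊢
    intro w' hr d hd
    have hext : N.extT w ∅ (Function.update v x d) t = N.extT w ∅ v t :=
      extT_congr N w ∅ t (fun z hz => Function.update_of_ne (fun (h : z = x) => hx (h ▸ hz)) _ _)
    exact hall d hd w' (by rw [hext]; exact hr)
  | kni =>
    intro N w v hv
    rw [sat_imp]; intro hne
    simp only [Fm.neq, NSModel.Sat, NSModel.extT] at hne ⊢
    intro w' _
    exact hne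
  | mp _ _ ih1 ih2 =>
    intro N w v hv
    exact (sat_imp N w v _ _).1 (ih1 N w v hv) (ih2 N w v hv)
  | nec _ ih =>
    intro N w v hv
    simp only [NSModel.Sat]
    intro w' _
    exact ih N w' v hv
  | @ug x ψ χ hx _ ih =>
    intro N w v hv
    rw [sat_imp]; intro hφ
    simp only [NSModel.Sat]
    intro d hd
    have hgood : N.GoodVal (Function.update v x d) := fun z => by
      by_cases hzx : z = x
      · subst hzx; simpa using hd
      · simpa [Function.update_of_ne hzx] using hv z
    have hφ' : N.Sat w (Function.update v x d) ψ :=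
      (Sat_congr N ψ (fun z hz => Function.update_of_ne (fun (h : z = x) => hx (h ▸ hz)) _ _) w).2 hφ
    exact (sat_imp N w _ _ _).1 (ih N w _ hgood) hφ'
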